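/- arXiv:1205.5610 — 2 statements merged into one kernel-verified Lean document; each statement's English description precedes it below -/
import Mathlib

section
/- Let F(z) = 4|c|²|z|²(Re z + 2)/(|z|² + 2Re z)² with c ≠ 0. Writing z = x + iy, along the curve where y/x = m is a fixed real constant, F(z) tends to 2|c|²(1 + m²) as z → 0. -/
open Filter Topology

theorem ray_quotient_eq_of_ne_zero (k m : ℝ) {x : ℝ} (hx : x ≠ 0) :
    k * ((x ^ 2 + (m * x) ^ 2) * (x + 2)) / (x ^ 2 + (m * x) ^ 2 + 2 * x) ^ 2 =
      k * (1 + m ^ 2) * (x + 2) / ((1 + m ^ 2) * x + 2) ^ 2 := by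
  have hx2 : x ^ 2 ≠ 0 := pow_ne_zero 2 hx
  calc k * ((x ^ 2 + (m * x) ^ 2) * (x + 2)) / (x ^ 2 + (m * x) ^ 2 + 2 * x) ^ 2
      = x ^ 2 * (k * (1 + m ^ 2) * (x + 2)) / (x ^ 2 * ((1 + m ^ 2) * x + 2) ^ 2) := by
        congr 1 <;> ring
    _ = k * (1 + m ^ 2) * (x + 2) / ((1 + m ^ 2) * x + 2) ^ 2 := mul_div_mul_left _ _ hx2

theorem tendsto_mul_add_two_div_sq_nhds_zero (k a : ℝ) :
    Tendsto (fun x : ℝ => k * (x + 2) / (a * x + 2) ^ 2) (𝓝 0) (𝓝 (k / 2)) := by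
  have hcont : ContinuousAt (fun x : ℝ => k * (x + 2) / (a * x + 2) ^ 2) 0 :=
    ContinuousAt.div (by fun_prop) (by fun_prop) (by norm_num)
  convert hcont.tendsto using 2
  norm_num
  ring

theorem levi_form_limit_along_ray_general (c : ℂ) (m : ℝ) :
    Tendsto (fun x : ℝ =>
        4 * ‖c‖ ^ 2 * ((x ^ 2 + (m * x) ^ 2) * (x + 2)) /
          (x ^ 2 + (m * x) ^ 2 + 2 * x) ^ 2)
      (nhdsWithin 0 (Set.Iio 0)) (nhds (2 * ‖c‖ ^ 2 * (1 + m ^ 2))) := by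
  have hlim := tendsto_mul_add_two_div_sq_nhds_zero (4 * ‖c‖ ^ 2 * (1 + m ^ 2)) (1 + m ^ 2)
  rw [show 4 * ‖c‖ ^ 2 * (1 + m ^ 2) / 2 = 2 * ‖c‖ ^ 2 * (1 + m ^ 2) by ring] at hlim
  refine (hlim.mono_left nhdsWithin_le_nhds).congr' ?_
  filter_upwards [self_mem_nhdsWithin] with x hx
  exact (ray_quotient_eq_of_ne_zero _ m hx.ne).symm

/-- For `F(z) = 4|c|²|z|²(Re z + 2)/(|z|² + 2Re z)²` with `c ≠ 0`, along the curve
`y = m·x` (i.e. `z = x + i m x`), `F` tends to `2|c|²(1+m²)` as `x → 0⁻`. -/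
theorem levi_form_limit_along_ray (c : ℂ) (hc : c ≠ 0) (m : ℝ) :
    Tendsto (fun x : ℝ =>
        4 * ‖c‖ ^ 2 * ((x ^ 2 + (m * x) ^ 2) * (x + 2)) /
          (x ^ 2 + (m * x) ^ 2 + 2 * x) ^ 2)
      (nhdsWithin 0 (Set.Iio 0)) (nhds (2 * ‖c‖ ^ 2 * (1 + m ^ 2))) :=
  levi_form_limit_along_ray_general c m
end

section
/- For u, v ∈ ℂ in a neighborhood of 0 (more generally wherever all terms are defined), the Jacobi elliptic functions satisfy the addition formula sn(u+v) = (sn u · cn v · dn v + sn v · cn u · dn u)/(1 - k² sn²u · sn²v). -/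
/-! Fix `s` and put `x = t`, `y = s - t`. The numerator `N` and denominator `D` of the
right-hand side satisfy `N' D = N D'` modulo `cn² = 1 - sn²` and `dn² = 1 - k² sn²`, so `N / D`
is constant in `t`; at `t = 0` it equals `sn s`. The quotient rule needs `D > 0` everywhere.
This follows from `sn² ≤ 1` and `k² sn² ≤ 1` unless `k² = 1`; in that case `|(cn²)'| ≤ 2 cn²`,
so by Grönwall `cn²` never vanishes and `sn² < 1`. -/

open Real

lemma pos_of_neg_mul_le_deriv {f f' : ℝ → ℝ} {c : ℝ} (hf : ∀ x, HasDerivAt f (f' x) x)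
    (hf' : ∀ x, -(c * f x) ≤ f' x) (h0 : 0 < f 0) {t : ℝ} (ht : 0 ≤ t) : 0 < f t := by
  have hg : ∀ x, HasDerivAt (fun x ↦ exp (c * x) * f x) (exp (c * x) * (c * f x + f' x)) x :=
    fun x ↦ ((((hasDerivAt_id' x).const_mul c).exp).mul (hf x)).congr_deriv (by ring)
  have hmono := monotone_of_hasDerivAt_nonneg hg fun x ↦
    mul_nonneg (exp_pos _).le (by linarith [hf' x])
  have h0t : f 0 ≤ exp (c * t) * f t := by simpa using hmono ht
  exact pos_of_mul_pos_right (h0.trans_le h0t) (exp_pos _).le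

lemma pos_of_abs_deriv_le_mul {f f' : ℝ → ℝ} {c : ℝ} (hf : ∀ x, HasDerivAt f (f' x) x)
    (hf' : ∀ x, |f' x| ≤ c * f x) (h0 : 0 < f 0) (t : ℝ) : 0 < f t := by
  rcases le_or_gt 0 t with ht | ht
  · exact pos_of_neg_mul_le_deriv hf (fun x ↦ neg_le_of_abs_le (hf' x)) h0 ht
  · have hfneg : ∀ x, HasDerivAt (fun x ↦ f (-x)) (-f' (-x)) x := fun x ↦ by
      simpa using (hf (0 - x)).comp_const_sub 0 x
    have := pos_of_neg_mul_le_deriv hfneg (fun x ↦ neg_le_neg (le_of_abs_le (hf' (-x))))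
      (by simpa using h0) (neg_nonneg.mpr ht.le)
    simpa using this

section Jacobi

variable {k : ℝ} {sn cn dn : ℝ → ℝ}

lemma sn_sq_lt_one_of_sq_eq_one (hcn : ∀ t, HasDerivAt cn (-(sn t * dn t)) t) (hcn0 : cn 0 = 1)
    (hcn2 : ∀ t, cn t ^ 2 = 1 - sn t ^ 2) (hdn2 : ∀ t, dn t ^ 2 = 1 - k ^ 2 * sn t ^ 2)
    (hk : k ^ 2 = 1) (t : ℝ) : sn t ^ 2 < 1 := by
  have hderiv : ∀ x, HasDerivAt (fun x ↦ cn x ^ 2) (-(2 * sn x * (cn x * dn x))) x := fun x ↦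
    ((hcn x).pow 2).congr_deriv (by push_cast; ring)
  have hbound : ∀ x, |-(2 * sn x * (cn x * dn x))| ≤ 2 * cn x ^ 2 := by
    intro x
    have hdc : |dn x| = |cn x| := sq_eq_sq_iff_abs_eq_abs _ _ |>.mp (by rw [hdn2, hcn2, hk]; ring)
    have hsn : |sn x| ≤ 1 :=
      abs_le_one_iff_mul_self_le_one.mpr (by nlinarith [hcn2 x, sq_nonneg (cn x)])
    rw [abs_neg, abs_mul, abs_mul, abs_mul, hdc, abs_two, ← sq, sq_abs]
    nlinarith [sq_nonneg (cn x)]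
  have := pos_of_abs_deriv_le_mul hderiv hbound (by simp [hcn0]) t
  linarith [hcn2 t]

lemma sn_add_denom_pos (hcn : ∀ t, HasDerivAt cn (-(sn t * dn t)) t) (hcn0 : cn 0 = 1)
    (hcn2 : ∀ t, cn t ^ 2 = 1 - sn t ^ 2) (hdn2 : ∀ t, dn t ^ 2 = 1 - k ^ 2 * sn t ^ 2)
    (x y : ℝ) : 0 < 1 - k ^ 2 * sn x ^ 2 * sn y ^ 2 := by
  have hsn_le : ∀ t, sn t ^ 2 ≤ 1 := fun t ↦ by nlinarith [sq_nonneg (cn t), hcn2 t]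
  have hksn_le : ∀ t, k ^ 2 * sn t ^ 2 ≤ 1 := fun t ↦ by nlinarith [sq_nonneg (dn t), hdn2 t]
  rcases lt_trichotomy (k ^ 2) 1 with hk | hk | hk
  · have hxy : sn x ^ 2 * sn y ^ 2 ≤ 1 := mul_le_one₀ (hsn_le x) (sq_nonneg _) (hsn_le y)
    nlinarith [mul_le_mul_of_nonneg_left hxy (sq_nonneg k)]
  · have hx := sn_sq_lt_one_of_sq_eq_one hcn hcn0 hcn2 hdn2 hk x
    have hy := sn_sq_lt_one_of_sq_eq_one hcn hcn0 hcn2 hdn2 hk y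
    rw [hk, one_mul]
    nlinarith [sq_nonneg (sn x), sq_nonneg (sn y)]
  · have hy : sn y ^ 2 < 1 := by nlinarith [hksn_le y, sq_nonneg (sn y)]
    nlinarith [hksn_le x, sq_nonneg (sn y)]

lemma hasDerivAt_sn_add_quotient (hsn : ∀ t, HasDerivAt sn (cn t * dn t) t)
    (hcn : ∀ t, HasDerivAt cn (-(sn t * dn t)) t)
    (hdn : ∀ t, HasDerivAt dn (-(k ^ 2 * sn t * cn t)) t) (hcn0 : cn 0 = 1)
    (hcn2 : ∀ t, cn t ^ 2 = 1 - sn t ^ 2) (hdn2 : ∀ t, dn t ^ 2 = 1 - k ^ 2 * sn t ^ 2)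
    (s t : ℝ) :
    HasDerivAt (fun t ↦ (sn t * cn (s - t) * dn (s - t) + sn (s - t) * cn t * dn t) /
      (1 - k ^ 2 * sn t ^ 2 * sn (s - t) ^ 2)) 0 t := by
  have hsn' := (hsn (s - t)).comp_const_sub s t
  have hcn' := (hcn (s - t)).comp_const_sub s t
  have hdn' := (hdn (s - t)).comp_const_sub s t
  have hnum : HasDerivAt (fun t ↦ sn t * cn (s - t) * dn (s - t) + sn (s - t) * cn t * dn t)
      (2 * k ^ 2 * sn t * sn (s - t) * (sn t ^ 2 - sn (s - t) ^ 2)) t := by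
    refine ((((hsn t).mul hcn').mul hdn').add ((hsn'.mul (hcn t)).mul (hdn t))).congr_deriv ?_
    simp only [Pi.mul_apply]
    linear_combination (sn t * sn (s - t)) * (hdn2 (s - t)) - (sn t * sn (s - t)) * (hdn2 t)
      + (k ^ 2 * sn t * sn (s - t)) * (hcn2 (s - t)) - (k ^ 2 * sn t * sn (s - t)) * (hcn2 t)
  have hden : HasDerivAt (fun t ↦ 1 - k ^ 2 * sn t ^ 2 * sn (s - t) ^ 2)
      (-2 * k ^ 2 * sn t * sn (s - t) *
        (cn t * dn t * sn (s - t) - sn t * cn (s - t) * dn (s - t))) t := by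
    refine ((hasDerivAt_const t 1).sub
      ((((hsn t).pow 2).const_mul (k ^ 2)).mul (hsn'.pow 2))).congr_deriv ?_
    simp only [Pi.pow_apply]
    push_cast
    ring
  have hwronskian :
      (2 * k ^ 2 * sn t * sn (s - t) * (sn t ^ 2 - sn (s - t) ^ 2)) *
          (1 - k ^ 2 * sn t ^ 2 * sn (s - t) ^ 2) -
        (sn t * cn (s - t) * dn (s - t) + sn (s - t) * cn t * dn t) *
          (-2 * k ^ 2 * sn t * sn (s - t) *
            (cn t * dn t * sn (s - t) - sn t * cn (s - t) * dn (s - t))) = 0 := by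
    linear_combination
      (2 * k ^ 2 * sn t * sn (s - t) * sn (s - t) ^ 2 * dn t ^ 2) * hcn2 t
      + (2 * k ^ 2 * sn t * sn (s - t) * sn (s - t) ^ 2 * (1 - sn t ^ 2)) * hdn2 t
      - (2 * k ^ 2 * sn t * sn (s - t) * sn t ^ 2 * dn (s - t) ^ 2) * hcn2 (s - t)
      - (2 * k ^ 2 * sn t * sn (s - t) * sn t ^ 2 * (1 - sn (s - t) ^ 2)) * hdn2 (s - t)
  exact (hnum.div hden (sn_add_denom_pos hcn hcn0 hcn2 hdn2 _ _).ne').congr_deriv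
    (by rw [hwronskian, zero_div])

end Jacobi

/-- Addition formula for the Jacobi elliptic function `sn`: if `sn, cn, dn` solve the
system `sn' = cn·dn`, `cn' = -sn·dn`, `dn' = -k²·sn·cn` with `sn 0 = 0`, `cn 0 = 1`,
`dn 0 = 1`, then wherever the denominator is nonzero,
`sn(u+v) = (sn u cn v dn v + sn v cn u dn u)/(1 - k² sn²u sn²v)`. -/
theorem jacobi_sn_addition (k : ℝ) (sn cn dn : ℝ → ℝ)
    (hsn : ∀ t, HasDerivAt sn (cn t * dn t) t)
    (hcn : ∀ t, HasDerivAt cn (-(sn t * dn t)) t)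
    (hdn : ∀ t, HasDerivAt dn (-(k ^ 2 * sn t * cn t)) t)
    (hsn0 : sn 0 = 0) (hcn0 : cn 0 = 1) (hdn0 : dn 0 = 1)
    (hcn2 : ∀ t, cn t ^ 2 = 1 - sn t ^ 2)
    (hdn2 : ∀ t, dn t ^ 2 = 1 - k ^ 2 * sn t ^ 2) :
    ∀ u v : ℝ, 1 - k ^ 2 * sn u ^ 2 * sn v ^ 2 ≠ 0 →
      sn (u + v) =
        (sn u * cn v * dn v + sn v * cn u * dn u) /
          (1 - k ^ 2 * sn u ^ 2 * sn v ^ 2) := by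
  intro u v _
  have hquot := hasDerivAt_sn_add_quotient hsn hcn hdn hcn0 hcn2 hdn2 (u + v)
  have hconst := is_const_of_deriv_eq_zero (fun t ↦ (hquot t).differentiableAt)
    (fun t ↦ (hquot t).deriv) u 0
  simpa [hsn0, hcn0, hdn0] using hconst.symm
end
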